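/- Let P be an N-element poset, let x ∈ P, and let X = {y ∈ P : y <_P x} be nonempty. Suppose that every element of P that is comparable with some element of X is also comparable with x, and suppose X is partitioned into disjoint subsets A and B such that no element of A is comparable with any element of B. Fix an injective map M : P ∖ X → {1,…,N} such that every labeling L of P with L|_{P∖X} = M satisfies ∂^{N−1}(L)⁻¹(1) ∈ X. Then the number of labelings L of P with L|_{P∖X} = M satisfying ∂^{N−1}(L)⁻¹(1) ∈ A equals |A| · (|X| − 1)!; equivalently, for L chosen uniformly at random among the |X|! labelings extending M, the probability that ∂^{N−1}(L)⁻¹(1) ∈ A is |A|/|X|. -/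

import Mathlib

/-!
Put `X = Iio x`. Every element above a point of `X` lies in `X` or above `x`, so a promotion
chain entering `Ici x` from `X` does so at the element of `Ici x` with the smallest label. Hence
the part of the chain outside `X`, and with it `∂L` on `P ∖ X`, depends only on `L` off `X`.
Inside `X`, the element carrying a label `w` after one promotion is comparable with the element
that carried a "source label" before (the next element of the chain, the start of the chain, or
itself), and the source label again depends only on `L` off `X`. Comparable elements of `X` lie
in the same block `A` or `B`, so tracing the label `1` back through `N − 1` promotions gives a
label `s`, determined by `M` alone, with `∂^{N−1}(L)⁻¹(1) ∈ A ↔ L⁻¹(s) ∈ A`. As `L` runs over the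
`|X|!` extensions of `M`, `L⁻¹(s)` is equidistributed on `X`, whence the count `|A| (|X| − 1)!`.
-/

open scoped Classical

noncomputable section

abbrev Labeling (P : Type*) [Fintype P] : Type _ := P ≃ Fin (Fintype.card P)

variable {P : Type*} [Fintype P] [PartialOrder P]

def IsLinearExt (L : Labeling P) : Prop := ∀ x y : P, x ≤ y → L x ≤ L y

def lSucc (L : Labeling P) (v : P)
    (h : (Finset.univ.filter fun y => v < y).Nonempty) : P :=
  L.symm (((Finset.univ.filter fun y => v < y).image L).min' (h.image _))

lemma lt_lSucc (L : Labeling P) (v : P)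
    (h : (Finset.univ.filter fun y => v < y).Nonempty) : v < lSucc L v h := by
  have hmem := Finset.min'_mem ((Finset.univ.filter fun y => v < y).image L) (h.image _)
  obtain ⟨y, hy, hLy⟩ := Finset.mem_image.mp hmem
  have heq : lSucc L v h = y := by
    unfold lSucc
    rw [← hLy, Equiv.symm_apply_apply]
  rw [heq]
  exact (Finset.mem_filter.mp hy).2

def promChainFrom (L : Labeling P) (v : P) : List P :=
  if h : (Finset.univ.filter fun y => v < y).Nonempty then
    v :: promChainFrom L (lSucc L v h)
  else [v]
termination_by (Finset.univ.filter fun y => v < y).card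
decreasing_by
  apply Finset.card_lt_card
  refine (Finset.ssubset_iff_of_subset ?_).mpr ?_
  · intro z hz
    simp only [Finset.mem_filter, Finset.mem_univ, true_and] at *
    exact lt_trans (lt_lSucc L v h) hz
  · exact ⟨lSucc L v h, by simp [lt_lSucc L v h], by simp⟩

def promote (L : Labeling P) : Labeling P :=
  if h : Nonempty P then
    ((List.formPerm (promChainFrom L (L.symm ⟨0, @Fintype.card_pos P _ h⟩))).trans L).trans
      (finRotate (Fintype.card P)).symm
  else L

/-- The label of `x` under `L`, as an integer in `{1, …, n}`. -/
def labelOf (L : Labeling P) (x : P) : ℕ := (L x : ℕ) + 1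

/-- The largest `a ∈ {0, …, n}` such that for all `j ∈ {n−a+1, …, n}`, the set
`{x ∈ P : j ≤ L(x) ≤ n}` is an upper order ideal of `P`. -/
def frozenA (L : Labeling P) : ℕ :=
  sSup {a : ℕ | a ≤ Fintype.card P ∧
    ∀ j, Fintype.card P - a + 1 ≤ j → j ≤ Fintype.card P →
      IsUpperSet {x : P | j ≤ labelOf L x ∧ labelOf L x ≤ Fintype.card P}}

/-- `x` is frozen with respect to `L` if `n − a + 1 ≤ L(x) ≤ n`, where `a` is as in `frozenA`. -/
def IsFrozen (L : Labeling P) (x : P) : Prop :=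
  Fintype.card P - frozenA L + 1 ≤ labelOf L x

/-- A labeling of an `n`-element poset is tangled if `n ≥ 2` and `∂^{n−2}(L)` is
not a linear extension. -/
def IsTangled (L : Labeling P) : Prop :=
  2 ≤ Fintype.card P ∧ ¬ IsLinearExt (promote^[Fintype.card P - 2] L)

/-- A labeling of an `n`-element poset is `k`-untangled if `n ≥ k + 2` and
`∂^{n−k−2}(L)` is not a linear extension. -/
def IsUntangled (k : ℕ) (L : Labeling P) : Prop :=
  k + 2 ≤ Fintype.card P ∧ ¬ IsLinearExt (promote^[Fintype.card P - k - 2] L)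

/-- The comparability graph of a poset. -/
def compGraph (P : Type*) [PartialOrder P] : SimpleGraph P where
  Adj x y := x ≠ y ∧ (x ≤ y ∨ y ≤ x)
  symm := by
    constructor
    intro x y hxy
    exact ⟨hxy.1.symm, hxy.2.symm⟩
  loopless := by
    constructor
    intro x hx
    exact hx.1 rfl

/-- The standardization of an injective map from a finite type into a linear order:
the unique relabeling by `{1, …, n}` with the same relative order of values. -/
def standardize {R β : Type*} [Fintype R] [LinearOrder β]
    (f : R → β) (hf : Function.Injective f) : R ≃ Fin (Fintype.card R) :=
  have hcard : (Finset.univ.image f).card = Fintype.card R := by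
    rw [Finset.card_image_of_injective _ hf, Finset.card_univ]
  (Equiv.ofBijective (fun x => (⟨f x, by simp⟩ : ↥(Finset.univ.image f)))
    (by
      rw [Fintype.bijective_iff_injective_and_card]
      refine ⟨fun a b hab => hf (congrArg Subtype.val hab), ?_⟩
      rw [Fintype.card_coe, hcard])).trans
    ((Finset.univ.image f).orderIsoOfFin hcard).symm.toEquiv

/-- The toggle operator `τ_{k+1}`: it swaps the labels `k+1` and `k+2` (i.e. the
`Fin`-labels `k` and `k+1`) unless `L⁻¹(k+1) <_P L⁻¹(k+2)`. -/
def toggle (L : Labeling P) (k : ℕ) : Labeling P :=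
  if h : k + 1 < Fintype.card P then
    if L.symm ⟨k, Nat.lt_of_succ_lt h⟩ < L.symm ⟨k + 1, h⟩ then L
    else L.trans (Equiv.swap ⟨k, Nat.lt_of_succ_lt h⟩ ⟨k + 1, h⟩)
  else L

/-- An element `x` is `L`-golden if every element strictly above it has a larger label. -/
def IsGolden (L : Labeling P) (x : P) : Prop := ∀ y : P, x < y → L x < L y

/-- The largest label `n` of an `n`-element poset, as an element of `Fin n`. -/
def topFin (P : Type*) [Fintype P] [Nonempty P] : Fin (Fintype.card P) :=
  ⟨Fintype.card P - 1, Nat.sub_lt Fintype.card_pos Nat.one_pos⟩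

section ExtensionCount

variable {α β : Type*} [Finite α] [Finite β]

theorem exists_equiv_eqOn_of_injOn (hcard : Nat.card α = Nat.card β) {g : α → β}
    {s : Set α} (hg : s.InjOn g) : ∃ f : α ≃ β, s.EqOn f g := by
  have := Fintype.ofFinite α
  have := Fintype.ofFinite β
  obtain ⟨f, hf⟩ := Set.MapsTo.exists_equiv_extend_of_card_eq (t := Finset.univ)
    (by simpa [← Nat.card_eq_fintype_card] using hcard)
    (fun _ _ => Finset.mem_coe.2 (Finset.mem_univ _)) hg
  exact ⟨f.trans (Equiv.subtypeUnivEquiv Finset.mem_univ), hf⟩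

theorem card_equiv_eqOn_compl (hcard : Nat.card α = Nat.card β) {g : α → β} {X : Set α}
    (hg : Xᶜ.InjOn g) : Nat.card {f : α ≃ β // Xᶜ.EqOn f g} = (Nat.card X).factorial := by
  obtain ⟨f₀, hf₀⟩ := exists_equiv_eqOn_of_injOn hcard hg
  have toPerm :
      {f : α ≃ β // Xᶜ.EqOn f g} ≃ {σ : Equiv.Perm α // ∀ a, a ∉ X → σ a = a} :=
    ((Equiv.refl α).equivCongr f₀.symm).subtypeEquiv fun f => by
      refine forall₂_congr fun a ha => ?_
      simp [Equiv.symm_apply_eq, hf₀ ha]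
  rw [Nat.card_congr (toPerm.trans (Equiv.Perm.subtypeEquivSubtypePerm (· ∈ X)).symm),
    Nat.card_perm]

theorem card_equiv_eqOn_compl_symm_eq (hcard : Nat.card α = Nat.card β) {g : α → β}
    {X : Set α} (hg : Xᶜ.InjOn g) {a : α} (ha : a ∈ X) {b : β} (hb : b ∉ g '' Xᶜ) :
    Nat.card {f : α ≃ β // Xᶜ.EqOn f g ∧ f.symm b = a} = (Nat.card X - 1).factorial := by
  have hcompl : (X \ {a})ᶜ = insert a Xᶜ := by
    ext z; by_cases z = a <;> simp_all
  have hga : Xᶜ.EqOn (Function.update g a b) g := fun z hz =>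
    Function.update_of_ne (by rintro rfl; exact hz ha) _ _
  have hinj : (X \ {a})ᶜ.InjOn (Function.update g a b) := by
    rw [hcompl, Set.injOn_insert (Set.notMem_compl_iff.2 ha), hga.image_eq, Function.update_self]
    exact ⟨hg.congr hga.symm, hb⟩
  rw [Nat.card_coe_set_eq, ← Set.ncard_sdiff_singleton_of_mem ha, ← Nat.card_coe_set_eq,
    ← card_equiv_eqOn_compl hcard hinj]
  refine Nat.card_congr (Equiv.subtypeEquivRight fun f => ?_)
  rw [hcompl]
  constructor
  · rintro ⟨hf, rfl⟩ z (rfl | hz)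
    · simp
    · exact (hf hz).trans (hga hz).symm
  · intro hf
    refine ⟨fun z hz => (hf (Or.inr hz)).trans (hga hz), ?_⟩
    rw [Equiv.symm_apply_eq, hf (Or.inl rfl), Function.update_self]

theorem card_equiv_eqOn_compl_symm_mem (hcard : Nat.card α = Nat.card β) {g : α → β}
    {X : Set α} (hg : Xᶜ.InjOn g) {A : Set α} (hA : A ⊆ X) {b : β} (hb : b ∉ g '' Xᶜ) :
    Nat.card {f : α ≃ β // Xᶜ.EqOn f g ∧ f.symm b ∈ A} =
      Nat.card A * (Nat.card X - 1).factorial := by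
  have := Fintype.ofFinite A
  let fibers : {f : α ≃ β // Xᶜ.EqOn f g ∧ f.symm b ∈ A} ≃
      Σ a : A, {f : α ≃ β // Xᶜ.EqOn f g ∧ f.symm b = a} :=
    { toFun f := ⟨⟨f.1.symm b, f.2.2⟩, f.1, f.2.1, rfl⟩
      invFun p := ⟨p.2.1, p.2.2.1, by rw [p.2.2.2]; exact p.1.2⟩
      left_inv _ := rfl
      right_inv := by
        rintro ⟨⟨a, ha⟩, f, hf, h⟩
        dsimp only at h
        subst h
        rfl }
  rw [Nat.card_congr fibers, Nat.card_sigma, Finset.sum_congr rfl fun a _ =>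
    card_equiv_eqOn_compl_symm_eq hcard hg (hA a.2) hb, Finset.sum_const, Finset.card_univ,
    smul_eq_mul, ← Nat.card_eq_fintype_card]

end ExtensionCount

section EqOn

variable {α β : Type*} {f g : α ≃ β} {s : Set α}

theorem Equiv.symm_apply_eq_of_eqOn (h : s.EqOn f g) {b : β} (hb : f.symm b ∈ s) :
    g.symm b = f.symm b := by
  rw [g.symm_apply_eq, ← h hb, f.apply_symm_apply]

theorem Equiv.symm_apply_mem_iff_of_eqOn (h : sᶜ.EqOn f g) (b : β) :
    f.symm b ∈ s ↔ g.symm b ∈ s := by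
  refine ⟨fun hf => ?_, fun hg => ?_⟩ <;> by_contra hn
  · exact hn (Equiv.symm_apply_eq_of_eqOn h.symm hn ▸ hf)
  · exact hn (Equiv.symm_apply_eq_of_eqOn h hn ▸ hg)

end EqOn

section MinLabel

variable {α : Type*} [Fintype α]

def minLabel (L : Labeling α) (s : Finset α) (hs : s.Nonempty) : α :=
  L.symm ((s.image L).min' (hs.image L))

variable {L L' : Labeling α} {s t : Finset α} {hs : s.Nonempty}

theorem minLabel_mem : minLabel L s hs ∈ s := by
  obtain ⟨y, hy, hLy⟩ := Finset.mem_image.1 (Finset.min'_mem (s.image L) (hs.image L))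
  rwa [minLabel, ← hLy, Equiv.symm_apply_apply]

theorem label_minLabel_le {y : α} (hy : y ∈ s) : L (minLabel L s hs) ≤ L y := by
  rw [minLabel, Equiv.apply_symm_apply]
  exact Finset.min'_le _ _ (Finset.mem_image_of_mem L hy)

theorem minLabel_of_subset (hst : s ⊆ t) {ht : t.Nonempty} (hmem : minLabel L t ht ∈ s) :
    minLabel L s hs = minLabel L t ht :=
  L.injective <| le_antisymm (label_minLabel_le hmem) (label_minLabel_le (hst minLabel_mem))

theorem minLabel_congr (h : ∀ y ∈ s, L y = L' y) : minLabel L s hs = minLabel L' s hs := by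
  have himage : s.image L = s.image L' := Finset.image_congr h
  apply L'.injective
  rw [← h _ minLabel_mem]
  simp only [minLabel, Equiv.apply_symm_apply, himage]

end MinLabel

section PromotionChain

variable {L L' : Labeling P}

theorem promChainFrom_of_nonempty {v : P} (h : ({y | v < y} : Finset P).Nonempty) :
    promChainFrom L v = v :: promChainFrom L (lSucc L v h) := by
  rw [promChainFrom, dif_pos h]

theorem promChainFrom_of_not_nonempty {v : P} (h : ¬({y | v < y} : Finset P).Nonempty) :
    promChainFrom L v = [v] := by
  rw [promChainFrom, dif_neg h]

theorem le_of_mem_promChainFrom {v z : P} (hz : z ∈ promChainFrom L v) : v ≤ z := by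
  induction v using promChainFrom.induct L with
  | case1 v h ih =>
    rw [promChainFrom_of_nonempty h, List.mem_cons] at hz
    rcases hz with rfl | hz
    · exact le_rfl
    · exact (lt_lSucc L v h).le.trans (ih hz)
  | case2 v h =>
    rw [promChainFrom_of_not_nonempty h, List.mem_singleton] at hz
    exact hz.ge

theorem lSucc_congr {v : P} (hv : ({y | v < y} : Finset P).Nonempty)
    (h : ∀ w, v < w → L w = L' w) : lSucc L v hv = lSucc L' v hv :=
  minLabel_congr (hs := hv) fun y hy => h y (by simpa using hy)

theorem promChainFrom_congr {v : P} (h : ∀ w, v < w → L w = L' w) :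
    promChainFrom L v = promChainFrom L' v := by
  induction v using promChainFrom.induct L with
  | case1 v hv ih =>
    rw [promChainFrom_of_nonempty hv, promChainFrom_of_nonempty hv, ← lSucc_congr hv h,
      ih fun w hw => h w ((lt_lSucc L v hv).trans hw)]
  | case2 v hv => rw [promChainFrom_of_not_nonempty hv, promChainFrom_of_not_nonempty hv]

theorem formPerm_promChainFrom_apply {v z : P} (hz : z ∈ promChainFrom L v) :
    (promChainFrom L v).formPerm z =
      if h : ({y | z < y} : Finset P).Nonempty then lSucc L z h else v := by
  induction v using promChainFrom.induct L with
  | case1 v hv ih =>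
    set s := lSucc L v hv
    have hvs : v < s := lt_lSucc L v hv
    obtain ⟨t, ht⟩ : ∃ t, promChainFrom L s = s :: t := by
      rw [promChainFrom]; split <;> exact ⟨_, rfl⟩
    rw [promChainFrom_of_nonempty hv] at hz ⊢
    rw [ht, List.formPerm_cons_cons, Equiv.Perm.mul_apply, ← ht]
    rcases List.mem_cons.1 hz with rfl | hz
    · have hz_notMem : z ∉ promChainFrom L s := fun h =>
        (le_of_mem_promChainFrom h).not_gt hvs
      rw [List.formPerm_apply_of_notMem hz_notMem, Equiv.swap_apply_left, dif_pos hv]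
    · rw [ih hz]
      split_ifs with hz'
      · have hsz : s < lSucc L z hz' := (le_of_mem_promChainFrom hz).trans_lt (lt_lSucc L z hz')
        exact Equiv.swap_apply_of_ne_of_ne (hvs.trans hsz).ne' hsz.ne'
      · exact Equiv.swap_apply_right v s
  | case2 v hv =>
    rw [promChainFrom_of_not_nonempty hv, List.mem_singleton] at hz
    subst hz
    simp [promChainFrom_of_not_nonempty hv, hv]

end PromotionChain

section Promotion

variable [Nonempty P]

def promChain (L : Labeling P) : List P := promChainFrom L (L.symm ⟨0, Fintype.card_pos⟩)

variable {L : Labeling P} {z : P}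

theorem promote_apply (L : Labeling P) (z : P) :
    promote L z = (finRotate _).symm (L ((promChain L).formPerm z)) := by
  rw [promote, dif_pos ‹_›]
  rfl

theorem promote_apply_of_notMem (hz : z ∉ promChain L) :
    promote L z = (finRotate _).symm (L z) := by
  rw [promote_apply, List.formPerm_apply_of_notMem hz]

theorem promote_apply_of_mem (hz : z ∈ promChain L) :
    promote L z = (finRotate _).symm (if h : ({y | z < y} : Finset P).Nonempty then
      L (lSucc L z h) else ⟨0, Fintype.card_pos⟩) := by
  rw [promote_apply, promChain, formPerm_promChainFrom_apply hz, apply_dite L,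
    Equiv.apply_symm_apply]

end Promotion

section BelowX

def ExitsThrough (x : P) : Prop := ∀ ⦃v w : P⦄, v < x → v < w → w < x ∨ x ≤ w

variable {x : P} {L L' : Labeling P}

def minLabelIci (L : Labeling P) (x : P) : P := minLabel L {y | x ≤ y} ⟨x, by simp⟩

theorem le_minLabelIci : x ≤ minLabelIci L x :=
  (Finset.mem_filter.1 minLabel_mem).2

theorem minLabelIci_congr (hL : (Set.Iio x)ᶜ.EqOn L L') : minLabelIci L x = minLabelIci L' x :=
  minLabel_congr fun y hy => hL (not_lt_of_ge (by simpa using hy))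

theorem lSucc_eq_minLabelIci (hx : ExitsThrough x) {v : P} (hv : v < x)
    (h : ({y | v < y} : Finset P).Nonempty) (hs : ¬ lSucc L v h < x) :
    lSucc L v h = minLabelIci L x :=
  (minLabel_of_subset (fun y hy => by simp at hy ⊢; exact hv.trans_le hy) (ht := h)
    (Finset.mem_filter.2 ⟨Finset.mem_univ _, (hx hv (lt_lSucc L v h)).resolve_left hs⟩)).symm

theorem mem_promChainFrom_iff_of_lt (hx : ExitsThrough x) {v z : P} (hv : v < x)
    (hz : ¬ z < x) :
    z ∈ promChainFrom L v ↔ z ∈ promChainFrom L (minLabelIci L x) := by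
  induction v using promChainFrom.induct L with
  | case1 v h ih =>
    rw [promChainFrom_of_nonempty h, List.mem_cons, or_iff_right (by rintro rfl; exact hz hv)]
    by_cases hs : lSucc L v h < x
    · exact ih hs
    · rw [lSucc_eq_minLabelIci hx hv h hs]
  | case2 v h => exact absurd ⟨x, by simpa using hv⟩ h

variable [Nonempty P]

theorem mem_promChain_iff_of_eqOn (hx : ExitsThrough x) (hL : (Set.Iio x)ᶜ.EqOn L L') {z : P}
    (hz : ¬ z < x) :
    z ∈ promChain L ↔ z ∈ promChain L' := by
  by_cases hc : L.symm ⟨0, Fintype.card_pos⟩ < x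
  · have hc' : L'.symm ⟨0, Fintype.card_pos⟩ < x :=
      (Equiv.symm_apply_mem_iff_of_eqOn hL _).1 hc
    rw [promChain, promChain, mem_promChainFrom_iff_of_lt hx hc hz,
      mem_promChainFrom_iff_of_lt hx hc' hz, minLabelIci_congr hL,
      promChainFrom_congr fun w hw => hL (not_lt_of_ge (le_minLabelIci.trans hw.le))]
  · rw [promChain, promChain, Equiv.symm_apply_eq_of_eqOn hL hc,
      promChainFrom_congr fun w hw => hL ((isLowerSet_Iio x).compl hw.le hc)]

theorem promote_eqOn (hx : ExitsThrough x) (hL : (Set.Iio x)ᶜ.EqOn L L') :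
    (Set.Iio x)ᶜ.EqOn (promote L) (promote L') := by
  intro z hz
  by_cases hmem : z ∈ promChain L
  · rw [promote_apply_of_mem hmem,
      promote_apply_of_mem ((mem_promChain_iff_of_eqOn hx hL hz).1 hmem)]
    congr 1
    refine dite_congr rfl (fun h => ?_) (fun _ => rfl)
    have habove : ∀ w, z < w → L w = L' w := fun w hw => hL ((isLowerSet_Iio x).compl hw.le hz)
    rw [lSucc_congr h habove, habove _ (lt_lSucc L' z h)]
  · rw [promote_apply_of_notMem hmem,
      promote_apply_of_notMem (mt (mem_promChain_iff_of_eqOn hx hL hz).2 hmem), hL hz]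

theorem iterate_promote_eqOn (hx : ExitsThrough x) (hL : (Set.Iio x)ᶜ.EqOn L L') (k : ℕ) :
    (Set.Iio x)ᶜ.EqOn (promote^[k] L) (promote^[k] L') := by
  induction k with
  | zero => exact hL
  | succ k ih =>
    rw [Function.iterate_succ_apply', Function.iterate_succ_apply']
    exact promote_eqOn hx ih

end BelowX

section Tracing

variable [Nonempty P] {x : P} {L L' : Labeling P}

-- After `∂L`, the label `w` sits on the element labelled `w + 1` or on its chain predecessor.
-- When that element is `minLabelIci L x`, entered by a chain starting in `X`, the predecessor
-- lies in `X` and we use the start of the chain (labelled `1`) instead, which is below it.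
def sourceLabel (x : P) (L : Labeling P) (w : Fin (Fintype.card P)) : Fin (Fintype.card P) :=
  if L.symm ⟨0, Fintype.card_pos⟩ < x ∧ finRotate _ w = L (minLabelIci L x) then
    ⟨0, Fintype.card_pos⟩
  else finRotate _ w

theorem sourceLabel_congr (hL : (Set.Iio x)ᶜ.EqOn L L') :
    sourceLabel x L = sourceLabel x L' := by
  funext w
  have hc : L.symm ⟨0, Fintype.card_pos⟩ < x ↔ L'.symm ⟨0, Fintype.card_pos⟩ < x :=
    Equiv.symm_apply_mem_iff_of_eqOn hL _
  simp only [sourceLabel, hc, minLabelIci_congr hL, hL (not_lt_of_ge (le_minLabelIci (L := L')))]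

theorem sourceLabel_spec (hx : ExitsThrough x) {e : P} (he : e < x) :
    L.symm (sourceLabel x L (promote L e)) < x ∧
      (L.symm (sourceLabel x L (promote L e)) ≤ e ∨
        e ≤ L.symm (sourceLabel x L (promote L e))) := by
  have hsrc : ∀ y, y < x → finRotate _ (promote L e) = L y →
      L.symm (sourceLabel x L (promote L e)) = y := fun y hy hrot => by
    have hne : ¬ finRotate _ (promote L e) = L (minLabelIci L x) := fun h =>
      not_lt_of_ge le_minLabelIci (L.injective (hrot.symm.trans h) ▸ hy)
    rw [sourceLabel, if_neg (hne ·.2), hrot, L.symm_apply_apply]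
  by_cases hmem : e ∈ promChain L
  · have hce : L.symm ⟨0, Fintype.card_pos⟩ ≤ e := le_of_mem_promChainFrom hmem
    have hsucc : ({y | e < y} : Finset P).Nonempty := ⟨x, by simpa using he⟩
    have hrot : finRotate _ (promote L e) = L (lSucc L e hsucc) := by
      rw [promote_apply_of_mem hmem, dif_pos hsucc, Equiv.apply_symm_apply]
    by_cases hs : lSucc L e hsucc < x
    · rw [hsrc _ hs hrot]
      exact ⟨hs, Or.inr (lt_lSucc L e hsucc).le⟩
    · have hcond : L.symm ⟨0, Fintype.card_pos⟩ < x ∧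
          finRotate _ (promote L e) = L (minLabelIci L x) :=
        ⟨hce.trans_lt he, by rw [hrot, lSucc_eq_minLabelIci hx he hsucc hs]⟩
      rw [sourceLabel, if_pos hcond]
      exact ⟨hcond.1, Or.inl hce⟩
  · rw [hsrc e he (by rw [promote_apply_of_notMem hmem, Equiv.apply_symm_apply])]
    exact ⟨he, Or.inl le_rfl⟩

def traceLabel (x : P) (L : Labeling P) : ℕ → Fin (Fintype.card P) → Fin (Fintype.card P)
  | 0, w => w
  | k + 1, w => traceLabel x L k (sourceLabel x (promote^[k] L) w)

theorem traceLabel_congr (hx : ExitsThrough x) (hL : (Set.Iio x)ᶜ.EqOn L L') (k : ℕ) :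
    traceLabel x L k = traceLabel x L' k := by
  induction k with
  | zero => rfl
  | succ k ih =>
    funext w
    simp only [traceLabel, ih, sourceLabel_congr (iterate_promote_eqOn hx hL k)]

theorem traceLabel_spec (hx : ExitsThrough x) {A : Set P}
    (hA : ∀ a b, a < x → b < x → (a ≤ b ∨ b ≤ a) → (a ∈ A ↔ b ∈ A)) (k : ℕ)
    (w : Fin (Fintype.card P)) (h : (promote^[k] L).symm w < x) :
    L.symm (traceLabel x L k w) < x ∧
      (L.symm (traceLabel x L k w) ∈ A ↔ (promote^[k] L).symm w ∈ A) := by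
  induction k generalizing w with
  | zero => exact ⟨h, Iff.rfl⟩
  | succ k ih =>
    rw [Function.iterate_succ_apply'] at h ⊢
    have hw : promote (promote^[k] L) ((promote (promote^[k] L)).symm w) = w :=
      Equiv.apply_symm_apply _ _
    obtain ⟨hs, hcomp⟩ := sourceLabel_spec hx h (L := promote^[k] L)
    rw [hw] at hs hcomp
    obtain ⟨ht, htA⟩ := ih _ hs
    exact ⟨ht, htA.trans (hA _ _ hs h hcomp)⟩

end Tracing

theorem card_extensions_landing_in_A_general (x : P) (X : Set P) (hX : X = {y : P | y < x})
    (hne : X.Nonempty)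
    (hcomp : ∀ z : P, (∃ w ∈ X, z ≤ w ∨ w ≤ z) → (z ≤ x ∨ x ≤ z))
    (A B : Set P) (hunion : A ∪ B = X)
    (hinc : ∀ a ∈ A, ∀ b ∈ B, ¬ (a ≤ b ∨ b ≤ a))
    (M : P → Fin (Fintype.card P)) (hMinj : Set.InjOn M Xᶜ)
    (hM : ∀ L : Labeling P, (∀ z ∉ X, L z = M z) →
      (promote^[Fintype.card P - 1] L).symm
        ⟨0, Fintype.card_pos_iff.mpr ⟨hne.choose⟩⟩ ∈ X) :
    Nat.card {L : Labeling P // (∀ z ∉ X, L z = M z) ∧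
        (promote^[Fintype.card P - 1] L).symm
          ⟨0, Fintype.card_pos_iff.mpr ⟨hne.choose⟩⟩ ∈ A} =
      Nat.card A * Nat.factorial (Nat.card X - 1) := by
  obtain rfl : X = Set.Iio x := hX
  have : Nonempty P := ⟨x⟩
  have hx : ExitsThrough x := fun v w hv hvw =>
    (hcomp w ⟨v, hv, Or.inr hvw.le⟩).elim (fun hwx => hwx.lt_or_eq.imp_right Eq.ge) Or.inr
  have hA : ∀ a b, a < x → b < x → (a ≤ b ∨ b ≤ a) → (a ∈ A ↔ b ∈ A) := by
    intro a b ha hb hab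
    have hsides : ∀ y, y < x → y ∈ A ∨ y ∈ B := fun y hy => hunion.ge hy
    exact ⟨fun haA => (hsides b hb).resolve_right fun hbB => hinc a haA b hbB hab,
      fun hbA => (hsides a ha).resolve_right fun haB => hinc b hbA a haB hab.symm⟩
  have hcard : Nat.card P = Nat.card (Fin (Fintype.card P)) := by simp
  obtain ⟨L₀, hL₀⟩ := exists_equiv_eqOn_of_injOn hcard hMinj
  set s := traceLabel x L₀ (Fintype.card P - 1) ⟨0, Fintype.card_pos⟩
  have hs : L₀.symm s < x := (traceLabel_spec hx hA _ _ (hM L₀ hL₀)).1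
  have hsM : s ∉ M '' (Set.Iio x)ᶜ := by
    rintro ⟨z, hz, hMz⟩
    rw [← hMz, ← hL₀ hz, L₀.symm_apply_apply] at hs
    exact hz hs
  rw [← card_equiv_eqOn_compl_symm_mem hcard hMinj (fun a ha => hunion.le (Or.inl ha)) hsM]
  refine Nat.card_congr (Equiv.subtypeEquivRight fun L => and_congr_right fun hL => ?_)
  have hsL : s = traceLabel x L (Fintype.card P - 1) ⟨0, Fintype.card_pos⟩ := by
    rw [traceLabel_congr hx (Set.EqOn.trans hL hL₀.symm)]
  rw [hsL]
  exact (traceLabel_spec hx hA _ _ (hM L hL)).2.symm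

/-- Let `X = {y : y <_P x}` be nonempty, with every element comparable
with some element of `X` comparable with `x`, and let `X = A ∪ B` be a partition
with no element of `A` comparable to any element of `B`.  Fix `M`, injective on
`P ∖ X`, such that every labeling `L` extending `M` satisfies
`(∂^{N−1} L)⁻¹(1) ∈ X`.  Then the number of labelings `L` extending `M` with
`(∂^{N−1} L)⁻¹(1) ∈ A` is `|A| · (|X| − 1)!` (equivalently, among the `|X|!`
labelings extending `M`, the probability of landing in `A` is `|A|/|X|`). -/
theorem card_extensions_landing_in_A (x : P) (X : Set P) (hX : X = {y : P | y < x})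
    (hne : X.Nonempty)
    (hcomp : ∀ z : P, (∃ w ∈ X, z ≤ w ∨ w ≤ z) → (z ≤ x ∨ x ≤ z))
    (A B : Set P) (hunion : A ∪ B = X) (hdisj : Disjoint A B)
    (hinc : ∀ a ∈ A, ∀ b ∈ B, ¬ (a ≤ b ∨ b ≤ a))
    (M : P → Fin (Fintype.card P)) (hMinj : Set.InjOn M Xᶜ)
    (hM : ∀ L : Labeling P, (∀ z ∉ X, L z = M z) →
      (promote^[Fintype.card P - 1] L).symm
        ⟨0, Fintype.card_pos_iff.mpr ⟨hne.choose⟩⟩ ∈ X) :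
    Nat.card {L : Labeling P // (∀ z ∉ X, L z = M z) ∧
        (promote^[Fintype.card P - 1] L).symm
          ⟨0, Fintype.card_pos_iff.mpr ⟨hne.choose⟩⟩ ∈ A} =
      Nat.card A * Nat.factorial (Nat.card X - 1) :=
  card_extensions_landing_in_A_general x X hX hne hcomp A B hunion hinc M hMinj hM

end
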